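/- Let 𝓜 be a quadratic module in M_n(ℝ[X]). Then the following are equivalent: (1) 𝓜 is Archimedean; (2) there exists a real number r > 0 such that (r − Σ_{i=1}^d x_i²)·I_n ∈ 𝓜; (3) there exists a real number r > 0 such that (r + x_i)·I_n ∈ 𝓜 and (r − x_i)·I_n ∈ 𝓜 for every i = 1,…,d. -/

import Mathlib

/-!
The scalar part `M = {f | f·I_n ∈ 𝓜}` of a quadratic module `𝓜` of `M_n(R)` is a quadratic module
of `R`, and `𝓜` is Archimedean iff `M` is: the matrices `A` with `k·I_n - Aᵀ A ∈ 𝓜` for some `k`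
are closed under sums and products, and they contain the matrix units and the `f·I_n` with
`k - f² ∈ M`, which together generate `M_n(R)`.

For a quadratic module `M` of an `ℝ`-algebra, the elements `f` with `c ± f ∈ M` for some real `c`
form a subalgebra: squares are handled by `(c + f)²(c - f) + (c - f)²(c + f) = 2c(c² - f²)` and
products by polarisation. Hence condition (3), which says that every `x_i` is bounded, makes all of
`ℝ[X]` bounded, i.e. `M` Archimedean; (1) ⇒ (2) sums the bounds `k_i - x_i² ∈ M`, and
(2) ⇒ (3) completes the square in `x_i`.
-/

open Matrix
noncomputable section

/-- The polynomial ring `ℝ[x_1, …, x_d]`. -/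
abbrev RX (d : ℕ) : Type := MvPolynomial (Fin d) ℝ

/-- The basic closed semialgebraic set `K_G` attached to a set `G` of polynomials. -/
def KsetP {d : ℕ} (G : Set (RX d)) : Set (Fin d → ℝ) :=
  {x | ∀ g ∈ G, 0 ≤ MvPolynomial.eval x g}

/-- Evaluation of a polynomial matrix at a point of `ℝ^d`. -/
def evalMat {d n : ℕ} (x : Fin d → ℝ) (A : Matrix (Fin n) (Fin n) (RX d)) :
    Matrix (Fin n) (Fin n) ℝ :=
  A.map (MvPolynomial.eval x)

/-- The set `K_𝒢` attached to a set `𝒢` of symmetric polynomial matrices. -/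
def KsetM {d n : ℕ} (𝒢 : Set (Matrix (Fin n) (Fin n) (RX d))) : Set (Fin d → ℝ) :=
  {x | ∀ A ∈ 𝒢, (evalMat x A).PosSemidef}

/-- Membership in the preordering of a commutative ring generated by a subset `G`:
the smallest subset containing `G` and all squares and closed under addition and
multiplication.  For `G = {g_1, …, g_m}` this is exactly the set of all finite sums
`Σ_{e ∈ {0,1}^m} σ_e g_1^{e_1} ⋯ g_m^{e_m}` with each `σ_e` a sum of squares. -/
inductive IsInPreordering {R : Type} [CommRing R] (G : Set R) : R → Prop
  | sq (a : R) : IsInPreordering G (a ^ 2)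
  | gen {g : R} : g ∈ G → IsInPreordering G g
  | add {a b : R} : IsInPreordering G a → IsInPreordering G b → IsInPreordering G (a + b)
  | mul {a b : R} : IsInPreordering G a → IsInPreordering G b → IsInPreordering G (a * b)

/-- Membership in the quadratic module of a commutative ring generated by a subset `G`:
for `G = {g_1, …, g_m}` this is exactly the set of all sums
`σ_0 + σ_1 g_1 + ⋯ + σ_m g_m` with each `σ_i` a sum of squares. -/
inductive IsInQuadModuleGen {R : Type} [CommRing R] (G : Set R) : R → Prop
  | one : IsInQuadModuleGen G 1
  | gen {g : R} : g ∈ G → IsInQuadModuleGen G g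
  | add {a b : R} : IsInQuadModuleGen G a → IsInQuadModuleGen G b → IsInQuadModuleGen G (a + b)
  | mul_sq (f : R) {a : R} : IsInQuadModuleGen G a → IsInQuadModuleGen G (f ^ 2 * a)

/-- For a quadratic module `M ⊆ R`, the quadratic module
`M^n = {Σ_i m_i A_iᵀ A_i : m_i ∈ M, A_i ∈ M_n(R)}` of `n × n` matrices. -/
def MatQM {R : Type} [CommRing R] (n : ℕ) (M : Set R) : Set (Matrix (Fin n) (Fin n) R) :=
  {B | ∃ (k : ℕ) (m : Fin k → R) (A : Fin k → Matrix (Fin n) (Fin n) R),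
    (∀ i, m i ∈ M) ∧ B = ∑ i, m i • ((A i)ᵀ * A i)}

/-- A quadratic module in `M_n(R)`: a subset of the symmetric matrices containing `I_n`,
closed under addition and under congruence `B ↦ Aᵀ B A`. -/
def IsMatQuadModule {R : Type} [CommRing R] {n : ℕ}
    (𝓜 : Set (Matrix (Fin n) (Fin n) R)) : Prop :=
  (∀ B ∈ 𝓜, B.IsSymm) ∧ (1 : Matrix (Fin n) (Fin n) R) ∈ 𝓜 ∧
    (∀ A ∈ 𝓜, ∀ B ∈ 𝓜, A + B ∈ 𝓜) ∧
    (∀ (A : Matrix (Fin n) (Fin n) R), ∀ B ∈ 𝓜, Aᵀ * B * A ∈ 𝓜)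

/-- Membership in the quadratic module `𝓜_𝒢` of `M_n(R)` generated by a set `𝒢` of
symmetric matrices. -/
inductive InMatQM {R : Type} [CommRing R] {n : ℕ}
    (𝒢 : Set (Matrix (Fin n) (Fin n) R)) : Matrix (Fin n) (Fin n) R → Prop
  | one : InMatQM 𝒢 1
  | gen {B : Matrix (Fin n) (Fin n) R} : B ∈ 𝒢 → InMatQM 𝒢 B
  | add {A B : Matrix (Fin n) (Fin n) R} : InMatQM 𝒢 A → InMatQM 𝒢 B → InMatQM 𝒢 (A + B)
  | conj (A : Matrix (Fin n) (Fin n) R) {B : Matrix (Fin n) (Fin n) R} :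
      InMatQM 𝒢 B → InMatQM 𝒢 (Aᵀ * B * A)

/-- Membership in the preordering `𝒯_𝒢` of `M_n(R)` generated by a set `𝒢` of symmetric
matrices: the smallest quadratic module of `M_n(R)` containing `𝒢` whose intersection with
`R · I_n` is closed under multiplication. -/
inductive InMatPre {R : Type} [CommRing R] {n : ℕ}
    (𝒢 : Set (Matrix (Fin n) (Fin n) R)) : Matrix (Fin n) (Fin n) R → Prop
  | one : InMatPre 𝒢 1
  | gen {B : Matrix (Fin n) (Fin n) R} : B ∈ 𝒢 → InMatPre 𝒢 B
  | add {A B : Matrix (Fin n) (Fin n) R} : InMatPre 𝒢 A → InMatPre 𝒢 B → InMatPre 𝒢 (A + B)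
  | conj (A : Matrix (Fin n) (Fin n) R) {B : Matrix (Fin n) (Fin n) R} :
      InMatPre 𝒢 B → InMatPre 𝒢 (Aᵀ * B * A)
  | smul_mul {p q : R} : InMatPre 𝒢 (p • (1 : Matrix (Fin n) (Fin n) R)) →
      InMatPre 𝒢 (q • (1 : Matrix (Fin n) (Fin n) R)) →
      InMatPre 𝒢 ((p * q) • (1 : Matrix (Fin n) (Fin n) R))

/-- A quadratic module `𝓜` of `M_n(R)` is Archimedean if for every `A ∈ M_n(R)` there is
`k ∈ ℕ` with `k·I_n − Aᵀ A ∈ 𝓜`. -/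
def MatArch {R : Type} [CommRing R] {n : ℕ} (𝓜 : Set (Matrix (Fin n) (Fin n) R)) : Prop :=
  ∀ A : Matrix (Fin n) (Fin n) R, ∃ k : ℕ,
    (k : R) • (1 : Matrix (Fin n) (Fin n) R) - Aᵀ * A ∈ 𝓜

/-- A quadratic module `M` of `R` (`1 ∈ M`, `M + M ⊆ M`, `f² M ⊆ M`). -/
def IsQuadModule {R : Type} [CommRing R] (M : Set R) : Prop :=
  (1 : R) ∈ M ∧ (∀ a ∈ M, ∀ b ∈ M, a + b ∈ M) ∧ ∀ (f : R), ∀ a ∈ M, f ^ 2 * a ∈ M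

/-- A quadratic module `M` of `R` is Archimedean if for every `f ∈ R` there is `k ∈ ℕ`
with `k − f² ∈ M`. -/
def ScalarArch {R : Type} [CommRing R] (M : Set R) : Prop :=
  ∀ f : R, ∃ k : ℕ, (k : R) - f ^ 2 ∈ M

/-- The set `R_∞(f, S)` of asymptotic values of `f` on `S`. -/
def AsympVals {d : ℕ} (f : RX d) (S : Set (Fin d → ℝ)) : Set ℝ :=
  {y | ∃ u : ℕ → (Fin d → ℝ), (∀ k, u k ∈ S) ∧
    Filter.Tendsto (fun k => ‖u k‖) Filter.atTop Filter.atTop ∧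
    Filter.Tendsto (fun k => MvPolynomial.eval (u k) f) Filter.atTop (nhds y)}

/-- The scalar polynomial `xᵀ F x` attached to a vector `x ∈ ℝ^n` and a polynomial
matrix `F`. -/
def quadForm {d n : ℕ} (v : Fin n → ℝ) (F : Matrix (Fin n) (Fin n) (RX d)) : RX d :=
  ∑ i, ∑ j, MvPolynomial.C (v i * v j) * F i j

/-- The canonical map from `ℝ[x_1, …, x_d]` to the completion
`ℝ[[x_1 − p_1, …, x_d − p_d]]` at a point `p`, i.e. Taylor expansion at `p`,
sending `x_i` to `p_i + X_i`. -/
def toCompletion {d : ℕ} (p : Fin d → ℝ) (f : RX d) : MvPowerSeries (Fin d) ℝ :=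
  MvPolynomial.eval₂ (MvPowerSeries.C : ℝ →+* MvPowerSeries (Fin d) ℝ)
    (fun i => (MvPowerSeries.C : ℝ →+* MvPowerSeries (Fin d) ℝ) (p i) + MvPowerSeries.X i) f

/-- The Hessian matrix `D²f(p)` of a polynomial `f` at a point `p`. -/
def Hess {d : ℕ} (f : RX d) (p : Fin d → ℝ) : Matrix (Fin d) (Fin d) ℝ :=
  Matrix.of fun i j => MvPolynomial.eval p (MvPolynomial.pderiv i (MvPolynomial.pderiv j f))

/-- `t_1, …, t_d` is a system of uniformizing parameters at `p`: each `t_i` vanishes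
at `p` and their differentials at `p` are linearly independent. -/
def IsUniformizing {d : ℕ} (p : Fin d → ℝ) (t : Fin d → RX d) : Prop :=
  (∀ i, MvPolynomial.eval p (t i) = 0) ∧
    (Matrix.of fun i j => MvPolynomial.eval p (MvPolynomial.pderiv j (t i))).det ≠ 0

/-- `f` satisfies the boundary Hessian conditions at `p` with respect to
`t_1, …, t_k`, part of a system of uniformizing parameters `t_1, …, t_d` at `p`:
in the completion at `p`, `f = f_0 + f_1 + f_2 + ⋯` with `f_j` homogeneous of degree
`j` in `t_1, …, t_d`, `f_1 = a_1 t_1 + ⋯ + a_k t_k` with all `a_i > 0`, and the quadratic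
form `f_2(0, …, 0, t_{k+1}, …, t_d)` is positive definite. -/
def SatisfiesBHC {d : ℕ} (p : Fin d → ℝ) (t : Fin d → RX d) (k : ℕ) (f : RX d) : Prop :=
  ∃ (a : Fin d → ℝ) (c : Matrix (Fin d) (Fin d) ℝ),
    (∀ i : Fin d, (i : ℕ) < k → 0 < a i) ∧ (∀ i : Fin d, k ≤ (i : ℕ) → a i = 0) ∧
    (∀ v : Fin d → ℝ, v ≠ 0 → (∀ i : Fin d, (i : ℕ) < k → v i = 0) →
      0 < ∑ i, ∑ j, c i j * v i * v j) ∧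
    toCompletion p (f - MvPolynomial.C (MvPolynomial.eval p f)
        - ∑ i, MvPolynomial.C (a i) * t i
        - ∑ i, ∑ j, MvPolynomial.C (c i j) * (t i * t j))
      ∈ (Ideal.span (Set.range fun i => toCompletion p (t i))) ^ 3

def scalarPart {R : Type} [CommRing R] {n : ℕ} (𝓜 : Set (Matrix (Fin n) (Fin n) R)) : Set R :=
  {f | f • (1 : Matrix (Fin n) (Fin n) R) ∈ 𝓜}

def IsMatBounded {R : Type} [CommRing R] {n : ℕ} (𝓜 : Set (Matrix (Fin n) (Fin n) R))
    (A : Matrix (Fin n) (Fin n) R) : Prop :=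
  ∃ k : ℕ, (k : R) • (1 : Matrix (Fin n) (Fin n) R) - Aᵀ * A ∈ 𝓜

namespace IsMatQuadModule

variable {R : Type} [CommRing R] {n : ℕ} {𝓜 : Set (Matrix (Fin n) (Fin n) R)}

theorem transpose_mul_mul_mem (h𝓜 : IsMatQuadModule 𝓜) (A : Matrix (Fin n) (Fin n) R)
    {B : Matrix (Fin n) (Fin n) R} (hB : B ∈ 𝓜) : Aᵀ * B * A ∈ 𝓜 :=
  h𝓜.2.2.2 A B hB

theorem add_mem (h𝓜 : IsMatQuadModule 𝓜) {A B : Matrix (Fin n) (Fin n) R} (hA : A ∈ 𝓜)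
    (hB : B ∈ 𝓜) : A + B ∈ 𝓜 :=
  h𝓜.2.2.1 A hA B hB

theorem transpose_mul_self_mem (h𝓜 : IsMatQuadModule 𝓜) (A : Matrix (Fin n) (Fin n) R) :
    Aᵀ * A ∈ 𝓜 := by
  simpa using h𝓜.transpose_mul_mul_mem A h𝓜.2.1

theorem nsmul_mem (h𝓜 : IsMatQuadModule 𝓜) {B : Matrix (Fin n) (Fin n) R} (hB : B ∈ 𝓜) :
    ∀ k : ℕ, k • B ∈ 𝓜
  | 0 => by simpa using h𝓜.transpose_mul_self_mem 0
  | k + 1 => by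
    rw [succ_nsmul]
    exact h𝓜.add_mem (h𝓜.nsmul_mem hB k) hB

theorem isQuadModule_scalarPart (h𝓜 : IsMatQuadModule 𝓜) : IsQuadModule (scalarPart 𝓜) := by
  refine ⟨by simpa [scalarPart] using h𝓜.2.1, fun a ha b hb => ?_, fun f a ha => ?_⟩
  · simpa [scalarPart, add_smul] using h𝓜.add_mem ha hb
  · have := h𝓜.transpose_mul_mul_mem (f • 1) ha
    show (f ^ 2 * a) • (1 : Matrix (Fin n) (Fin n) R) ∈ 𝓜
    convert this using 1
    simp only [Matrix.transpose_smul, Matrix.transpose_one, Matrix.smul_mul, Matrix.mul_smul,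
      Matrix.one_mul, smul_smul]
    ring_nf

theorem isMatBounded_zero (h𝓜 : IsMatQuadModule 𝓜) : IsMatBounded 𝓜 0 :=
  ⟨0, by simpa using h𝓜.transpose_mul_self_mem 0⟩

theorem isMatBounded_add (h𝓜 : IsMatQuadModule 𝓜) {A B : Matrix (Fin n) (Fin n) R}
    (hA : IsMatBounded 𝓜 A) (hB : IsMatBounded 𝓜 B) : IsMatBounded 𝓜 (A + B) := by
  obtain ⟨k, hk⟩ := hA
  obtain ⟨l, hl⟩ := hB
  refine ⟨k + k + l + l, ?_⟩
  have key : ((k + k + l + l : ℕ) : R) • (1 : Matrix (Fin n) (Fin n) R) - (A + B)ᵀ * (A + B) =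
      ((k : R) • 1 - Aᵀ * A) + ((k : R) • 1 - Aᵀ * A) + ((l : R) • 1 - Bᵀ * B) +
        ((l : R) • 1 - Bᵀ * B) + (A - B)ᵀ * (A - B) := by
    simp only [Matrix.transpose_add, Matrix.transpose_sub, Nat.cast_add, add_smul]
    noncomm_ring
  rw [key]
  exact h𝓜.add_mem (h𝓜.add_mem (h𝓜.add_mem (h𝓜.add_mem hk hk) hl) hl)
    (h𝓜.transpose_mul_self_mem _)

theorem isMatBounded_mul (h𝓜 : IsMatQuadModule 𝓜) {A B : Matrix (Fin n) (Fin n) R}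
    (hA : IsMatBounded 𝓜 A) (hB : IsMatBounded 𝓜 B) : IsMatBounded 𝓜 (A * B) := by
  obtain ⟨k, hk⟩ := hA
  obtain ⟨l, hl⟩ := hB
  refine ⟨k * l, ?_⟩
  have key : ((k * l : ℕ) : R) • (1 : Matrix (Fin n) (Fin n) R) - (A * B)ᵀ * (A * B) =
      Bᵀ * ((k : R) • 1 - Aᵀ * A) * B + k • ((l : R) • 1 - Bᵀ * B) := by
    simp only [Matrix.transpose_mul, Nat.cast_mul, mul_smul, mul_sub, sub_mul, smul_sub,
      Matrix.mul_smul, Matrix.smul_mul, Matrix.mul_one, Matrix.mul_assoc,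
      ← Nat.cast_smul_eq_nsmul R]
    abel
  rw [key]
  exact h𝓜.add_mem (h𝓜.transpose_mul_mul_mem B hk) (h𝓜.nsmul_mem hl k)

theorem isMatBounded_smul_one_iff {f : R} :
    IsMatBounded 𝓜 (f • (1 : Matrix (Fin n) (Fin n) R)) ↔
      ∃ k : ℕ, (k : R) - f ^ 2 ∈ scalarPart 𝓜 := by
  have key : ∀ k : ℕ, (k : R) • (1 : Matrix (Fin n) (Fin n) R) - (f • 1)ᵀ * (f • 1) =
      ((k : R) - f ^ 2) • 1 := by
    intro k
    simp only [Matrix.transpose_smul, Matrix.transpose_one, Matrix.smul_mul, Matrix.mul_smul,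
      Matrix.one_mul, smul_smul, sub_smul, sq]
  simp only [IsMatBounded, key]
  rfl

-- `I - E_jj` is a symmetric idempotent, so `I - E_ijᵀ E_ij = (I - E_jj)ᵀ (I - E_jj)`.
theorem isMatBounded_single (h𝓜 : IsMatQuadModule 𝓜) (i j : Fin n) :
    IsMatBounded 𝓜 (Matrix.single i j 1) := by
  refine ⟨1, ?_⟩
  have key : ((1 : ℕ) : R) • (1 : Matrix (Fin n) (Fin n) R) -
      (Matrix.single i j (1 : R))ᵀ * Matrix.single i j 1 =
      (1 - Matrix.single j j 1)ᵀ * (1 - Matrix.single j j 1) := by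
    simp only [Matrix.transpose_single, Matrix.transpose_sub, Matrix.transpose_one,
      Matrix.single_mul_single_same, Nat.cast_one, one_smul, mul_one, sub_mul, mul_sub,
      Matrix.one_mul]
    abel
  rw [key]
  exact h𝓜.transpose_mul_self_mem _

theorem matArch_iff_scalarArch (h𝓜 : IsMatQuadModule 𝓜) :
    MatArch 𝓜 ↔ ScalarArch (scalarPart 𝓜) := by
  refine ⟨fun h f => ?_, fun h A => ?_⟩
  · exact isMatBounded_smul_one_iff.1 (h (f • 1))
  · rw [Matrix.matrix_eq_sum_single A]
    refine Finset.sum_induction _ (IsMatBounded 𝓜) (fun _ _ => h𝓜.isMatBounded_add)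
      h𝓜.isMatBounded_zero fun i _ => Finset.sum_induction _ (IsMatBounded 𝓜)
        (fun _ _ => h𝓜.isMatBounded_add)
        h𝓜.isMatBounded_zero fun j _ => ?_
    have hsingle : Matrix.single i j (A i j) = (A i j • 1) * Matrix.single i j 1 := by
      rw [Matrix.smul_mul, Matrix.one_mul, Matrix.smul_single, smul_eq_mul, mul_one]
    rw [hsingle]
    exact h𝓜.isMatBounded_mul (isMatBounded_smul_one_iff.2 (h (A i j)))
      (h𝓜.isMatBounded_single i j)

end IsMatQuadModule

namespace IsQuadModule

variable {R : Type} [CommRing R] {M : Set R}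

theorem add_mem (hM : IsQuadModule M) {a b : R} (ha : a ∈ M) (hb : b ∈ M) : a + b ∈ M :=
  hM.2.1 a ha b hb

theorem sq_mul_mem (hM : IsQuadModule M) (f : R) {a : R} (ha : a ∈ M) : f ^ 2 * a ∈ M :=
  hM.2.2 f a ha

theorem sq_mem (hM : IsQuadModule M) (f : R) : f ^ 2 ∈ M := by
  simpa using hM.sq_mul_mem f hM.1

theorem sum_mem (hM : IsQuadModule M) {ι : Type*} {s : Finset ι} {f : ι → R}
    (hf : ∀ i ∈ s, f i ∈ M) : ∑ i ∈ s, f i ∈ M :=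
  Finset.sum_induction f (· ∈ M) (fun _ _ => hM.add_mem) (by simpa using hM.sq_mem 0) hf

section Algebra

variable [Algebra ℝ R]

def IsBounded (M : Set R) (f : R) : Prop :=
  ∃ c : ℝ, algebraMap ℝ R c + f ∈ M ∧ algebraMap ℝ R c - f ∈ M

theorem smul_mem (hM : IsQuadModule M) {c : ℝ} (hc : 0 ≤ c) {a : R} (ha : a ∈ M) : c • a ∈ M := by
  have h := hM.sq_mul_mem (algebraMap ℝ R √c) ha
  rwa [← map_pow, Real.sq_sqrt hc, ← Algebra.smul_def] at h

theorem algebraMap_mem (hM : IsQuadModule M) {c : ℝ} (hc : 0 ≤ c) : algebraMap ℝ R c ∈ M := by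
  simpa [Algebra.algebraMap_eq_smul_one] using hM.smul_mem hc hM.1

-- `(c + f)²(c - f) + (c - f)²(c + f) = 2c (c² - f²)`.
theorem sq_sub_sq_mem (hM : IsQuadModule M) {c : ℝ} (hc : 0 < c) {f : R}
    (hplus : algebraMap ℝ R c + f ∈ M) (hminus : algebraMap ℝ R c - f ∈ M) :
    algebraMap ℝ R (c ^ 2) - f ^ 2 ∈ M := by
  have h := hM.smul_mem (inv_nonneg.2 (mul_pos two_pos hc).le)
    (hM.add_mem (hM.sq_mul_mem (algebraMap ℝ R c + f) hminus)
      (hM.sq_mul_mem (algebraMap ℝ R c - f) hplus))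
  convert h using 1
  have hinv : algebraMap ℝ R (2 * c)⁻¹ * (2 * algebraMap ℝ R c) = 1 := by
    rw [← map_ofNat (algebraMap ℝ R) 2, ← map_mul, ← map_mul, inv_mul_cancel₀ (by positivity),
      map_one]
  rw [Algebra.smul_def, map_pow]
  linear_combination (f ^ 2 - algebraMap ℝ R c ^ 2) * hinv

theorem IsBounded.exists_pos (hM : IsQuadModule M) {f : R} (hf : IsBounded M f) :
    ∃ c : ℝ, 0 < c ∧ algebraMap ℝ R c + f ∈ M ∧ algebraMap ℝ R c - f ∈ M := by
  obtain ⟨c, hplus, hminus⟩ := hf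
  have hshift := hM.algebraMap_mem (c := |c| + 1 - c) (by linarith [le_abs_self c])
  refine ⟨|c| + 1, by positivity, ?_, ?_⟩
  · convert hM.add_mem hshift hplus using 1
    rw [← add_assoc, ← map_add, sub_add_cancel]
  · convert hM.add_mem hshift hminus using 1
    rw [add_sub_assoc', ← map_add, sub_add_cancel]

theorem isBounded_algebraMap (hM : IsQuadModule M) (c : ℝ) : IsBounded M (algebraMap ℝ R c) := by
  refine ⟨|c|, ?_, ?_⟩
  · rw [← map_add]
    exact hM.algebraMap_mem (by linarith [neg_abs_le c])
  · rw [← map_sub]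
    exact hM.algebraMap_mem (by linarith [le_abs_self c])

theorem IsBounded.add (hM : IsQuadModule M) {f g : R} (hf : IsBounded M f) (hg : IsBounded M g) :
    IsBounded M (f + g) := by
  obtain ⟨c, hcf, hcf'⟩ := hf
  obtain ⟨e, heg, heg'⟩ := hg
  refine ⟨c + e, ?_, ?_⟩
  · convert hM.add_mem hcf heg using 1
    rw [map_add]; ring
  · convert hM.add_mem hcf' heg' using 1
    rw [map_add]; ring

theorem IsBounded.neg {f : R} (hf : IsBounded M f) : IsBounded M (-f) := by
  obtain ⟨c, hplus, hminus⟩ := hf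
  exact ⟨c, by rwa [← sub_eq_add_neg], by rwa [sub_neg_eq_add]⟩

theorem IsBounded.smul (hM : IsQuadModule M) (a : ℝ) {f : R} (hf : IsBounded M f) :
    IsBounded M (a • f) := by
  wlog ha : 0 ≤ a generalizing a f
  · simpa using this (-a) hf.neg (by linarith)
  obtain ⟨c, hplus, hminus⟩ := hf
  refine ⟨a * c, ?_, ?_⟩
  · convert hM.smul_mem ha hplus using 1
    rw [smul_add, Algebra.smul_def a (algebraMap ℝ R c), ← map_mul]
  · convert hM.smul_mem ha hminus using 1
    rw [smul_sub, Algebra.smul_def a (algebraMap ℝ R c), ← map_mul]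

theorem IsBounded.sq (hM : IsQuadModule M) {f : R} (hf : IsBounded M f) : IsBounded M (f ^ 2) := by
  obtain ⟨c, hc, hplus, hminus⟩ := hf.exists_pos hM
  exact ⟨c ^ 2, hM.add_mem (hM.algebraMap_mem (by positivity)) (hM.sq_mem f),
    hM.sq_sub_sq_mem hc hplus hminus⟩

theorem IsBounded.mul (hM : IsQuadModule M) {f g : R} (hf : IsBounded M f) (hg : IsBounded M g) :
    IsBounded M (f * g) := by
  have key : f * g = (4⁻¹ : ℝ) • (f + g) ^ 2 + -((4⁻¹ : ℝ) • (f + -g) ^ 2) := by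
    rw [Algebra.smul_def, Algebra.smul_def]
    have h4 : algebraMap ℝ R 4⁻¹ * 4 = 1 := by
      rw [← map_ofNat (algebraMap ℝ R) 4, ← map_mul, inv_mul_cancel₀ four_ne_zero, map_one]
    linear_combination (-(f * g)) * h4
  rw [key]
  exact (((hf.add hM hg).sq hM).smul hM _).add hM (((hf.add hM hg.neg).sq hM).smul hM _).neg

def boundedSubalgebra (hM : IsQuadModule M) : Subalgebra ℝ R where
  carrier := {f | IsBounded M f}
  mul_mem' hf hg := hf.mul hM hg
  add_mem' hf hg := hf.add hM hg
  algebraMap_mem' := hM.isBounded_algebraMap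

theorem scalarArch_of_forall_isBounded (hM : IsQuadModule M) (h : ∀ f, IsBounded M f) :
    ScalarArch M := by
  intro f
  obtain ⟨c, -, hminus⟩ := (h f).sq hM
  refine ⟨⌈c⌉₊, ?_⟩
  convert hM.add_mem (hM.algebraMap_mem (sub_nonneg.2 (Nat.le_ceil c))) hminus using 1
  rw [← map_natCast (algebraMap ℝ R), map_sub]
  ring

end Algebra

section MvPolynomial

open MvPolynomial

variable {σ : Type} {M : Set (MvPolynomial σ ℝ)}

theorem scalarArch_of_isBounded_X (hM : IsQuadModule M) (h : ∀ i, IsBounded M (X i)) :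
    ScalarArch M := by
  have htop : hM.boundedSubalgebra = ⊤ :=
    eq_top_iff.2 (adjoin_range_X (R := ℝ) ▸ Algebra.adjoin_le (Set.range_subset_iff.2 h))
  exact hM.scalarArch_of_forall_isBounded fun f =>
    (htop ▸ Algebra.mem_top : f ∈ hM.boundedSubalgebra)

variable [Fintype σ]

theorem exists_C_sub_sum_X_sq_mem (hM : IsQuadModule M) (h : ScalarArch M) :
    ∃ r : ℝ, 0 < r ∧ C r - ∑ i, X i ^ 2 ∈ M := by
  choose k hk using fun i : σ => h (X i)
  refine ⟨∑ i, (k i : ℝ) + 1, by positivity, ?_⟩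
  convert hM.add_mem (hM.sum_mem fun i _ => hk i) hM.1 using 1
  simp only [map_add, map_sum, map_natCast, map_one, Finset.sum_sub_distrib]
  ring

theorem C_add_X_mem_and_C_sub_X_mem (hM : IsQuadModule M) {r : ℝ}
    (h : C r - ∑ j, X j ^ 2 ∈ M) (i : σ) :
    C (r + 4⁻¹) + X i ∈ M ∧ C (r + 4⁻¹) - X i ∈ M := by
  classical
  have hrest : ∑ j ∈ Finset.univ.erase i, (X j : MvPolynomial σ ℝ) ^ 2 ∈ M :=
    hM.sum_mem fun j _ => hM.sq_mem _
  -- complete the square in `x_i`: `r + 1/4 + s x_i = (r - Σ x_j²) + (x_i + s/2)² + Σ_{j ≠ i} x_j²`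
  have hsq : ∀ s : ℝ, s ^ 2 = 1 → C (r + 4⁻¹) + C s * X i ∈ M := by
    intro s hs
    convert hM.add_mem (hM.add_mem h (hM.sq_mem (X i + C (s / 2)))) hrest using 1
    rw [← Finset.add_sum_erase _ _ (Finset.mem_univ i)]
    have hconst : (C (r + 4⁻¹) : MvPolynomial σ ℝ) = C r + C (s / 2) ^ 2 := by
      rw [← map_pow, ← map_add]
      congr 1
      linear_combination -hs / 4
    have hlin : (C s : MvPolynomial σ ℝ) = 2 * C (s / 2) := by
      rw [← map_ofNat C 2, ← map_mul]
      ring_nf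
    rw [hconst, hlin]
    ring
  constructor
  · simpa using hsq 1 (one_pow 2)
  · simpa [sub_eq_add_neg] using hsq (-1) (by norm_num)

end MvPolynomial

end IsQuadModule

theorem stmt_10_general {d n : ℕ} (𝓜 : Set (Matrix (Fin n) (Fin n) (RX d)))
    (h𝓜 : IsMatQuadModule 𝓜) :
    (MatArch 𝓜 ↔ ∃ r : ℝ, 0 < r ∧
        (MvPolynomial.C r - ∑ i : Fin d, MvPolynomial.X i ^ 2) •
          (1 : Matrix (Fin n) (Fin n) (RX d)) ∈ 𝓜) ∧
    ((∃ r : ℝ, 0 < r ∧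
        (MvPolynomial.C r - ∑ i : Fin d, MvPolynomial.X i ^ 2) •
          (1 : Matrix (Fin n) (Fin n) (RX d)) ∈ 𝓜) ↔
      ∃ r : ℝ, 0 < r ∧ ∀ i : Fin d,
        (MvPolynomial.C r + MvPolynomial.X i) • (1 : Matrix (Fin n) (Fin n) (RX d)) ∈ 𝓜 ∧
        (MvPolynomial.C r - MvPolynomial.X i) • (1 : Matrix (Fin n) (Fin n) (RX d)) ∈ 𝓜) := by
  have hM := h𝓜.isQuadModule_scalarPart
  have harch := h𝓜.matArch_iff_scalarArch
  have h12 : MatArch 𝓜 → ∃ r : ℝ, 0 < r ∧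
      MvPolynomial.C r - ∑ i : Fin d, MvPolynomial.X i ^ 2 ∈ scalarPart 𝓜 :=
    fun h => hM.exists_C_sub_sum_X_sq_mem (harch.1 h)
  have h23 : (∃ r : ℝ, 0 < r ∧
      MvPolynomial.C r - ∑ i : Fin d, MvPolynomial.X i ^ 2 ∈ scalarPart 𝓜) →
      ∃ r : ℝ, 0 < r ∧ ∀ i : Fin d, MvPolynomial.C r + MvPolynomial.X i ∈ scalarPart 𝓜 ∧
        MvPolynomial.C r - MvPolynomial.X i ∈ scalarPart 𝓜 :=
    fun ⟨r, hr, h⟩ => ⟨r + 4⁻¹, by positivity, hM.C_add_X_mem_and_C_sub_X_mem h⟩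
  have h31 : (∃ r : ℝ, 0 < r ∧ ∀ i : Fin d, MvPolynomial.C r + MvPolynomial.X i ∈ scalarPart 𝓜 ∧
      MvPolynomial.C r - MvPolynomial.X i ∈ scalarPart 𝓜) → MatArch 𝓜 :=
    fun ⟨r, _, h⟩ => harch.2 (hM.scalarArch_of_isBounded_X fun i => ⟨r, h i⟩)
  exact ⟨⟨h12, h31 ∘ h23⟩, ⟨h23, h12 ∘ h31⟩⟩

/-- Archimedean criterion for quadratic modules of polynomial matrices:
(1) `𝓜` Archimedean ⟺ (2) `(r − Σ x_i²)·I_n ∈ 𝓜` for some `r > 0`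
⟺ (3) `(r ± x_i)·I_n ∈ 𝓜` for some `r > 0` and all `i`. -/
theorem stmt_10 {d n : ℕ} (hn : 0 < n) (𝓜 : Set (Matrix (Fin n) (Fin n) (RX d)))
    (h𝓜 : IsMatQuadModule 𝓜) :
    (MatArch 𝓜 ↔ ∃ r : ℝ, 0 < r ∧
        (MvPolynomial.C r - ∑ i : Fin d, MvPolynomial.X i ^ 2) •
          (1 : Matrix (Fin n) (Fin n) (RX d)) ∈ 𝓜) ∧
    ((∃ r : ℝ, 0 < r ∧
        (MvPolynomial.C r - ∑ i : Fin d, MvPolynomial.X i ^ 2) •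
          (1 : Matrix (Fin n) (Fin n) (RX d)) ∈ 𝓜) ↔
      ∃ r : ℝ, 0 < r ∧ ∀ i : Fin d,
        (MvPolynomial.C r + MvPolynomial.X i) • (1 : Matrix (Fin n) (Fin n) (RX d)) ∈ 𝓜 ∧
        (MvPolynomial.C r - MvPolynomial.X i) • (1 : Matrix (Fin n) (Fin n) (RX d)) ∈ 𝓜) :=
  stmt_10_general 𝓜 h𝓜

end
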